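/- Let g : ℕ⁺ → {−1,+1} be the completely multiplicative function with g(n) = +1 iff the 3-free part of n is ≡ 1 mod 3. Then 0 ≤ ∑_{i=1}^{k} g(i) ≤ log₃(k) + 1 for every k ≥ 1. -/
import Mathlib


open Finset

/-- The completely multiplicative function `g : ℕ⁺ → {-1,+1}` with `g(n) = +1` iff the
`3`-free part of `n` is `≡ 1 (mod 3)`. -/
def gThree (n : ℕ) : ℤ := if (n / 3 ^ (n.factorization 3)) % 3 = 1 then 1 else -1

lemma gThree_mod_one {n : ℕ} (h : n % 3 = 1) : gThree n = 1 := by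
  have h3 : ¬ (3 ∣ n) := by omega
  have : n.factorization 3 = 0 := Nat.factorization_eq_zero_of_not_dvd h3
  simp [gThree, this, h]

lemma gThree_mod_two {n : ℕ} (h : n % 3 = 2) : gThree n = -1 := by
  have h3 : ¬ (3 ∣ n) := by omega
  have : n.factorization 3 = 0 := Nat.factorization_eq_zero_of_not_dvd h3
  simp [gThree, this, h]

lemma gThree_three_mul {m : ℕ} (hm : m ≠ 0) : gThree (3 * m) = gThree m := by
  have h3 : (3 : ℕ).Prime := by norm_num
  have hf : (3 * m).factorization 3 = m.factorization 3 + 1 := by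
    rw [Nat.factorization_mul (by norm_num) hm]
    simp [h3.factorization_self, add_comm]
  unfold gThree
  rw [hf, pow_succ', Nat.mul_div_mul_left _ _ (by norm_num)]

lemma S_rec (k : ℕ) :
    ∑ i ∈ Finset.Icc 1 k, gThree i =
      (∑ i ∈ Finset.Icc 1 (k / 3), gThree i) + (if k % 3 = 1 then 1 else 0) := by
  induction k with
  | zero => simp
  | succ k ih =>
    rw [Finset.sum_Icc_succ_top (by omega)]
    have hlt : (k+1) % 3 = 0 ∨ (k+1) % 3 = 1 ∨ (k+1) % 3 = 2 := by omega
    rcases hlt with h | h | h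
    · -- (k+1) % 3 = 0, so k % 3 = 2, (k+1)/3 = k/3 + 1
      have hk2 : k % 3 = 2 := by omega
      have hq : (k + 1) / 3 = k / 3 + 1 := by omega
      have hmul : k + 1 = 3 * (k / 3 + 1) := by omega
      have hg : gThree (k + 1) = gThree (k / 3 + 1) := by
        rw [hmul]; exact gThree_three_mul (by omega)
      rw [ih, hg, hq, Finset.sum_Icc_succ_top (by omega)]
      simp [h, hk2, add_comm]
    · -- (k+1) % 3 = 1, so k % 3 = 0, (k+1)/3 = k/3
      have hk0 : k % 3 = 0 := by omega
      have hq : (k + 1) / 3 = k / 3 := by omega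
      rw [ih, gThree_mod_one h, hq]
      simp [h, hk0]
    · -- (k+1) % 3 = 2, so k % 3 = 1, (k+1)/3 = k/3
      have hk1 : k % 3 = 1 := by omega
      have hq : (k + 1) / 3 = k / 3 := by omega
      rw [ih, gThree_mod_two h, hq]
      simp [h, hk1]

lemma S_nonneg (k : ℕ) : 0 ≤ ∑ i ∈ Finset.Icc 1 k, gThree i := by
  induction k using Nat.strong_induction_on with
  | _ k ih =>
    rcases Nat.eq_zero_or_pos k with h | h
    · simp [h]
    · rw [S_rec]
      have := ih (k / 3) (by omega)
      split <;> omega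

lemma S_le_log (k : ℕ) (hk : 1 ≤ k) :
    ∑ i ∈ Finset.Icc 1 k, gThree i ≤ (Nat.log 3 k : ℤ) + 1 := by
  induction k using Nat.strong_induction_on with
  | _ k ih =>
    rw [S_rec]
    by_cases h3 : k < 3
    · have : k / 3 = 0 := by omega
      rw [this]
      simp only [show (Finset.Icc 1 0 : Finset ℕ) = ∅ by simp, Finset.sum_empty, zero_add]
      have : (0:ℤ) ≤ (Nat.log 3 k : ℤ) := by positivity
      split <;> omega
    · have hq : 1 ≤ k / 3 := by omega
      have := ih (k / 3) (by omega) hq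
      have hlog : Nat.log 3 (k / 3) = Nat.log 3 k - 1 := Nat.log_div_base 3 k
      have hpos : 0 < Nat.log 3 k := Nat.log_pos (by norm_num) (by omega)
      have : (Nat.log 3 (k/3) : ℤ) = (Nat.log 3 k : ℤ) - 1 := by
        rw [hlog]; omega
      split <;> omega

/-- The partial sums of `g` satisfy `0 ≤ ∑_{i=1}^{k} g(i) ≤ log₃ k + 1`. -/
theorem gThree_partial_sum_bounds (k : ℕ) (hk : 1 ≤ k) :
    0 ≤ ∑ i ∈ Finset.Icc 1 k, gThree i ∧
    ((∑ i ∈ Finset.Icc 1 k, gThree i : ℤ) : ℝ) ≤ Real.logb 3 k + 1 := by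
  refine ⟨S_nonneg k, ?_⟩
  have h1 := S_le_log k hk
  have h2 : (Nat.log 3 k : ℝ) ≤ Real.logb 3 k := Real.natLog_le_logb k 3
  calc ((∑ i ∈ Finset.Icc 1 k, gThree i : ℤ) : ℝ) ≤ ((Nat.log 3 k : ℤ) : ℝ) + 1 := by
        exact_mod_cast (by exact_mod_cast h1 : ((∑ i ∈ Finset.Icc 1 k, gThree i : ℤ) : ℝ) ≤ ((Nat.log 3 k : ℤ) + 1 : ℤ))
    _ ≤ Real.logb 3 k + 1 := by push_cast; linarith
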